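/- Let p > 3 be a prime. For the one-parameter family y² = x³ + t x² + t², the second-moment sum satisfies ∑_{t mod p} a_t(p)² = p² − 2p − χ(−3)·p − 1, where a_t(p) := −∑_{x mod p} χ(x³ + t x² + t²). -/

import Mathlib

/-! For `t ≠ 0` the substitution `x = t u` gives `a_t = -∑_u χ(1 + t g(u))` with
`g(u) = u²(u + 1)`, while `a_0 = -∑_x χ(x³) = 0` (the `t = 0` term of `∑_t (∑_u χ(1 + t g(u)))²`
is `p²` instead). Expanding the square and summing over `t` first, the character sums
`∑_t χ((1 + t a)(1 + t b)) = p [a = b] - χ(a) χ(b)` give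
`∑_t a_t² = p · #{(u, v) | g u = g v} - (∑_u χ(g u))² - p²`.
Here `∑_u χ(g u) = -1`, and `g u = g v` holds iff `u = v` or `(u, v)` lies on a conic with
`p - χ(-3)` points, two of which are on the diagonal; so the fibre count is `2p - 2 - χ(-3)`. -/

open Finset

section QuadraticCharSums

variable {F : Type*} [Field F] [Fintype F] [DecidableEq F]

local notation "χ" => quadraticChar F
local notation "q" => (Fintype.card F : ℤ)

theorem quadraticChar_sum_add_mul_eq_zero (hF : ringChar F ≠ 2) (d : F) {c : F} (hc : c ≠ 0) :
    ∑ t, χ (d + t * c) = 0 := by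
  rw [← quadraticChar_sum_zero hF]
  exact ((Equiv.mulRight₀ c hc).trans (Equiv.addLeft d)).sum_comp χ

theorem quadraticChar_sum_sq : ∑ s, χ (s ^ 2) = q - 1 := by
  have hterm (s : F) : χ (s ^ 2) = 1 - if s = 0 then 1 else 0 := by
    split_ifs with hs
    · simp [hs]
    · simp [quadraticChar_sq_one' hs]
  simp [hterm, sum_sub_distrib]

theorem quadraticChar_sum_mul_add_self (hF : ringChar F ≠ 2) (c : F) :
    ∑ s, χ (s * (s + c)) = if c = 0 then q - 1 else -1 := by
  split_ifs with hc
  · simpa [hc, sq] using quadraticChar_sum_sq (F := F)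
  have hJ : jacobiSum χ χ = -χ (-1) := by
    simpa [(quadraticChar_isQuadratic F).inv] using
      jacobiSum_nontrivial_inv (quadraticChar_ne_one hF)
  -- substituting `s = -c x` turns the sum into `χ(-1)` times the Jacobi sum `J(χ, χ)`
  have hsubst : ∑ x, χ (-1) * (χ x * χ (1 - x)) = ∑ s, χ (s * (s + c)) :=
    Fintype.sum_equiv (Equiv.mulLeft₀ (-c) (neg_ne_zero.mpr hc)) _ _ fun x => by
      show _ = χ (-c * x * (-c * x + c))
      rw [show -c * x * (-c * x + c) = -1 * c ^ 2 * (x * (1 - x)) by ring,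
        map_mul, map_mul, map_mul, quadraticChar_sq_one' hc, mul_one]
  rw [← hsubst, ← mul_sum, ← jacobiSum, hJ, mul_neg, ← sq,
    quadraticChar_sq_one (neg_ne_zero.mpr one_ne_zero)]

theorem quadraticChar_sum_add_mul_add (hF : ringChar F ≠ 2) (r s : F) :
    ∑ t, χ ((t + r) * (t + s)) = if r = s then q - 1 else -1 := by
  have hshift : ∑ t, χ ((t + r) * (t + s)) = ∑ t, χ (t * (t + (s - r))) :=
    Fintype.sum_equiv (Equiv.addRight r) _ _ fun t => by
      show _ = χ ((t + r) * (t + r + (s - r)))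
      rw [add_add_sub_cancel]
  rw [hshift, quadraticChar_sum_mul_add_self hF]
  exact if_congr (sub_eq_zero.trans eq_comm) rfl rfl

theorem quadraticChar_sum_one_add_mul_mul_one_add_mul (hF : ringChar F ≠ 2) (a b : F) :
    ∑ t, χ ((1 + t * a) * (1 + t * b)) = (if a = b then q else 0) - χ a * χ b := by
  rcases eq_or_ne a 0 with rfl | ha
  · rcases eq_or_ne b 0 with rfl | hb
    · simp
    · simp only [mul_zero, add_zero, one_mul, if_neg hb.symm, MulChar.map_zero, zero_mul,
        sub_zero]
      exact quadraticChar_sum_add_mul_eq_zero hF 1 hb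
  rcases eq_or_ne b 0 with rfl | hb
  · simp only [mul_zero, add_zero, mul_one, if_neg ha, MulChar.map_zero, sub_zero]
    exact quadraticChar_sum_add_mul_eq_zero hF 1 ha
  have hfactor (t : F) : (1 + t * a) * (1 + t * b) = a * b * ((t + a⁻¹) * (t + b⁻¹)) := by
    field_simp; ring
  simp only [hfactor, map_mul χ (a * b), ← mul_sum]
  rw [quadraticChar_sum_add_mul_add hF, map_mul]
  by_cases hab : a = b
  · subst hab
    rw [if_pos rfl, if_pos rfl, ← sq, quadraticChar_sq_one ha]; ring
  · rw [if_neg (inv_injective.ne hab), if_neg hab]; ring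

theorem sum_sq_sum_quadraticChar_one_add_mul (hF : ringChar F ≠ 2) {ι : Type*} [Fintype ι]
    (g : ι → F) :
    ∑ t, (∑ u, χ (1 + t * g u)) ^ 2 =
      q * ∑ u, ∑ v, (if g u = g v then 1 else 0) - (∑ u, χ (g u)) ^ 2 := by
  calc ∑ t, (∑ u, χ (1 + t * g u)) ^ 2
      = ∑ u, ∑ v, ∑ t, χ ((1 + t * g u) * (1 + t * g v)) := by
        simp only [sq, sum_mul_sum, map_mul]
        rw [sum_comm]
        exact sum_congr rfl fun _ _ => sum_comm
    _ = q * ∑ u, ∑ v, (if g u = g v then 1 else 0) - (∑ u, χ (g u)) ^ 2 := by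
        simp only [quadraticChar_sum_one_add_mul_mul_one_add_mul hF, sum_sub_distrib, mul_sum,
          mul_ite, mul_one, mul_zero]
        rw [sq, sum_mul_sum]

theorem sum_boole_sq_add_mul_add_eq_zero (hF : ringChar F ≠ 2) (B C : F) :
    ∑ v, (if v ^ 2 + B * v + C = 0 then 1 else 0) = 1 + χ (B ^ 2 - 4 * C) := by
  have h2 : (2 : F) ≠ 0 := Ring.two_ne_zero hF
  have hiff (v : F) : v ^ 2 + B * v + C = 0 ↔ (2 * v + B) ^ 2 = B ^ 2 - 4 * C := by
    constructor
    · intro h; linear_combination 4 * h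
    · intro h
      have h4 : (4 : F) ≠ 0 := by simpa [show (4 : F) = 2 ^ 2 by norm_num] using h2
      exact (mul_eq_zero.mp (by linear_combination h : (4 : F) * _ = 0)).resolve_left h4
  have hsubst : ∑ v, (if (2 * v + B) ^ 2 = B ^ 2 - 4 * C then 1 else 0) =
      ∑ w, (if w ^ 2 = B ^ 2 - 4 * C then (1 : ℤ) else 0) :=
    Fintype.sum_equiv ((Equiv.mulLeft₀ 2 h2).trans (Equiv.addRight B)) _ _ fun v => rfl
  simp only [hiff]
  rw [hsubst, sum_boole, add_comm, ← quadraticChar_card_sqrts hF]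
  simp

theorem quadraticChar_sum_pow_three (hF : ringChar F ≠ 2) : ∑ x, χ (x ^ 3) = 0 := by
  have hcube (x : F) : χ (x ^ 3) = χ x := by
    rcases eq_or_ne x 0 with rfl | hx
    · simp
    · rw [pow_succ, map_mul, quadraticChar_sq_one' hx, one_mul]
  simp only [hcube, quadraticChar_sum_zero hF]

theorem quadraticChar_sum_sq_mul_add_one (hF : ringChar F ≠ 2) :
    ∑ u, χ (u ^ 2 * (u + 1)) = -1 := by
  have hterm (u : F) : χ (u ^ 2 * (u + 1)) = χ (1 + u * 1) - if u = 0 then 1 else 0 := by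
    rcases eq_or_ne u 0 with rfl | hu
    · simp
    · rw [map_mul, quadraticChar_sq_one' hu, if_neg hu, mul_one, add_comm]; ring
  simp only [hterm, sum_sub_distrib, quadraticChar_sum_add_mul_eq_zero hF 1 one_ne_zero,
    sum_ite_eq', mem_univ, if_true, zero_sub]

theorem sum_boole_sq_mul_add_one_eq_sq_mul_add_one (hF : ringChar F ≠ 2) (h3 : (3 : F) ≠ 0) :
    ∑ u : F, ∑ v : F, (if u ^ 2 * (u + 1) = v ^ 2 * (v + 1) then 1 else 0) =
      2 * q - 2 - χ (-3) := by
  have h2 : (2 : F) ≠ 0 := Ring.two_ne_zero hF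
  -- `u²(u+1) - v²(v+1) = (u - v) Q(u, v)`; the conic `Q = 0` meets the diagonal at `u = 0, -2/3`
  set Q : F → F → F := fun u v => v ^ 2 + (u + 1) * v + (u ^ 2 + u) with hQ
  have hfiber (u v : F) : (if u ^ 2 * (u + 1) = v ^ 2 * (v + 1) then 1 else 0 : ℤ) =
      (if u = v then 1 else 0) + (if Q u v = 0 then 1 else 0) -
        if u = v then (if Q u v = 0 then 1 else 0) else 0 := by
    have hiff : u ^ 2 * (u + 1) = v ^ 2 * (v + 1) ↔ u = v ∨ Q u v = 0 := by
      rw [← sub_eq_zero, show u ^ 2 * (u + 1) - v ^ 2 * (v + 1) = (u - v) * Q u v by ring,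
        mul_eq_zero, sub_eq_zero]
    rw [if_congr hiff rfl rfl]
    split_ifs <;> simp_all
  have hconic : ∑ u, ∑ v, (if Q u v = 0 then 1 else 0 : ℤ) = q - χ (-3) := by
    have h13 : (1 : F) ≠ -3 := fun h =>
      h2 (mul_self_eq_zero.mp (by linear_combination h : (2 : F) * 2 = 0))
    have hdisc (u : F) : (u + 1) ^ 2 - 4 * (u ^ 2 + u) = (1 + u * 1) * (1 + u * -3) := by ring
    simp only [hQ, sum_boole_sq_add_mul_add_eq_zero hF, hdisc, sum_add_distrib,
      quadraticChar_sum_one_add_mul_mul_one_add_mul hF 1 (-3), if_neg h13, MulChar.map_one, one_mul]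
    simp only [sum_const, card_univ, nsmul_eq_mul, mul_one]
    ring
  have hmeet : ∑ u, (if Q u u = 0 then 1 else 0 : ℤ) = 2 := by
    have hQuu (u : F) : Q u u = 0 ↔ u ^ 2 + 2 / 3 * u + 0 = 0 := by
      rw [show Q u u = 3 * (u ^ 2 + 2 / 3 * u + 0) by simp only [hQ]; field_simp; ring,
        mul_eq_zero, or_iff_right h3]
    simp only [hQuu, sum_boole_sq_add_mul_add_eq_zero hF, mul_zero, sub_zero,
      quadraticChar_sq_one' (div_ne_zero h2 h3)]
    norm_num
  simp only [hfiber, sum_add_distrib, sum_sub_distrib, hconic, sum_ite_eq, mem_univ,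
    if_true, hmeet, sum_const, card_univ, nsmul_eq_mul, mul_one]
  ring

theorem quadraticChar_sum_cube_add_mul_sq_add_sq {t : F} (ht : t ≠ 0) :
    ∑ x, χ (x ^ 3 + t * x ^ 2 + t ^ 2) = ∑ u, χ (1 + t * (u ^ 2 * (u + 1))) :=
  Eq.symm <| Fintype.sum_equiv (Equiv.mulLeft₀ t ht) _ _ fun u => by
    show _ = χ ((t * u) ^ 3 + t * (t * u) ^ 2 + t ^ 2)
    rw [show (t * u) ^ 3 + t * (t * u) ^ 2 + t ^ 2 = t ^ 2 * (1 + t * (u ^ 2 * (u + 1))) by ring,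
      map_mul, quadraticChar_sq_one' ht, one_mul]

theorem quadraticChar_sum_sq_sum_cube_add_mul_sq_add_sq (hF : ringChar F ≠ 2)
    (h3 : (3 : F) ≠ 0) :
    ∑ t, (∑ x, χ (x ^ 3 + t * x ^ 2 + t ^ 2)) ^ 2 = q ^ 2 - 2 * q - χ (-3) * q - 1 := by
  have hpoint (t : F) : (∑ x, χ (x ^ 3 + t * x ^ 2 + t ^ 2)) ^ 2 + (if t = 0 then q ^ 2 else 0) =
      (∑ u, χ (1 + t * (u ^ 2 * (u + 1)))) ^ 2 := by
    rcases eq_or_ne t 0 with rfl | ht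
    · simp only [zero_mul, add_zero, ne_eq, OfNat.ofNat_ne_zero, not_false_eq_true, zero_pow,
        quadraticChar_sum_pow_three hF, if_pos, MulChar.map_one, sum_const, card_univ,
        nsmul_eq_mul, mul_one, zero_add]
    · rw [if_neg ht, add_zero, quadraticChar_sum_cube_add_mul_sq_add_sq ht]
  have hsum := sum_congr rfl fun t (_ : t ∈ univ) => hpoint t
  rw [sum_add_distrib, sum_ite_eq', if_pos (mem_univ _), sum_sq_sum_quadraticChar_one_add_mul hF,
    sum_boole_sq_mul_add_one_eq_sq_mul_add_one hF h3, quadraticChar_sum_sq_mul_add_one hF] at hsum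
  linear_combination hsum

end QuadraticCharSums

/-- For a prime `p > 3` and the family `y² = x³ + t x² + t²`, the
second-moment sum equals `p² - 2p - χ(-3) p - 1`. -/
theorem second_moment_family_three (p : ℕ) [Fact p.Prime] (hp : 3 < p) :
    ∑ t : ZMod p,
      (-∑ x : ZMod p,
        legendreSym p ((x.val : ℤ) ^ 3 + (t.val : ℤ) * (x.val : ℤ) ^ 2 + (t.val : ℤ) ^ 2)) ^ 2 =
      (p : ℤ) ^ 2 - 2 * (p : ℤ) - legendreSym p (-3) * (p : ℤ) - 1 := by
  have hchar : ringChar (ZMod p) ≠ 2 := by rw [ZMod.ringChar_zmod_n]; omega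
  have h3 : (3 : ZMod p) ≠ 0 := by
    rw [← Nat.cast_ofNat, Ne, ZMod.natCast_eq_zero_iff]
    exact fun h => absurd (Nat.le_of_dvd three_pos h) (by omega)
  simp only [legendreSym, neg_sq, Int.cast_add, Int.cast_mul, Int.cast_pow, Int.cast_natCast,
    ZMod.natCast_zmod_val, Int.cast_neg, Int.cast_ofNat]
  rw [quadraticChar_sum_sq_sum_cube_add_mul_sq_add_sq hchar h3, ZMod.card]
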